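/- arXiv:0809.0386 — 2 statements merged into one kernel-verified Lean document; each statement's English description precedes it below -/
import Mathlib

section
/- Let n ≥ 1, k ∈ {1,…,n}, and fix a set I ⊆ {1,…,n} with |I| = k. Let E ⊆ ℝ × ℝⁿ be a discrete set which is homogeneous with respect to positive integers (m·(x,z) ∈ E for every (x,z) ∈ E and every positive integer m), and such that every (x,z) ∈ E satisfies zᵢ ≥ 1 for i ∈ I and zᵢ = 0 for i ∉ I. Let v > n and c_k = (v−n)/(kv+n). Then the following are equivalent: (1) for every N > 0 there exists (x,z) ∈ E with ‖z‖ ≥ N and |x| ≤ (∏_{i∈I} zᵢ)^{−v/n}; (2) for every T > 0 there exist t = (t₁,…,t_n) with tᵢ ≥ 0 and ∑ᵢtᵢ ≥ T, and a nonzero (x,z) ∈ E, such that max(e^{∑ᵢtᵢ}·|x|, max_{1≤i≤n} e^{−tᵢ}|zᵢ|) ≤ e^{−c_k·∑ᵢtᵢ}. -/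
open Filter MeasureTheory Metric Set BigOperators

open Topology Real

/-!
(1) ⇒ (2): for a good point `(x, z)` with `P = ∏_{i ∈ I} zᵢ`, flow for total time
`S = log P / (1 - k c)` with `tᵢ = log zᵢ + c S` on `I` and `tᵢ = 0` elsewhere. The relation
`(v / n) (1 - k c) = 1 + c` between the exponents puts both coordinates at `e^{-c S}`, and
`‖z‖ ≤ P` makes `S` large.

(2) ⇒ (1): conversely the flow bounds give `log P ≤ (1 - k c) S` and
`|x| ≤ e^{-(1 + c) S} ≤ P^{-v/n}`. A large `S` makes `|x|` tiny, and discreteness of `E` then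
forces `‖z‖` to be large, unless `E` meets `{x = 0}`, where integer multiples of one point suffice.
-/

theorem finite_inter_of_forall_not_accPt {X : Type*} [TopologicalSpace X] {E K : Set X}
    (hE : ∀ p, ¬AccPt p (𝓟 E)) (hK : IsCompact K) : (E ∩ K).Finite := by
  by_contra h
  obtain ⟨p, -, hp⟩ := Set.Infinite.exists_accPt_of_subset_isCompact h hK inter_subset_right
  exact hE p (hp.mono (principal_mono.2 inter_subset_left))

theorem eventually_forall_lt_norm_snd {F : Type*} [NormedAddCommGroup F] [ProperSpace F]
    {E : Set (ℝ × F)} (hE : ∀ p, ¬AccPt p (𝓟 E)) (hE0 : ∀ p ∈ E, p.1 ≠ 0) (N : ℝ) :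
    ∀ᶠ δ in 𝓝 (0 : ℝ), ∀ p ∈ E, |p.1| ≤ δ → N < ‖p.2‖ := by
  set K := closedBall (0 : ℝ) 1 ×ˢ closedBall (0 : F) N
  have hfin := finite_inter_of_forall_not_accPt hE
    ((isCompact_closedBall _ _).prod (isCompact_closedBall _ _) : IsCompact K)
  have hsmall : ∀ᶠ δ in 𝓝 (0 : ℝ), δ < 1 ∧ ∀ q ∈ E ∩ K, δ < |q.1| :=
    (gt_mem_nhds one_pos).and <|
      hfin.eventually_all.2 fun q hq ↦ gt_mem_nhds (abs_pos.2 (hE0 q hq.1))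
  filter_upwards [hsmall] with δ ⟨hδ1, hδK⟩ p hp hpδ
  by_contra! hpN
  have hpK : p ∈ K := ⟨by simpa using hpδ.trans hδ1.le, by simpa using hpN⟩
  exact (hδK p ⟨hp, hpK⟩).not_ge hpδ

theorem exists_fst_eq_zero_le_norm_snd {F : Type*} [NormedAddCommGroup F] [NormedSpace ℝ F]
    {E : Set (ℝ × F)} (hE : ∀ p ∈ E, ∀ m : ℕ, 0 < m → (m : ℝ) • p ∈ E) {p : ℝ × F} (hp : p ∈ E)
    (hp1 : p.1 = 0) (hp2 : p.2 ≠ 0) (N : ℝ) : ∃ q ∈ E, q.1 = 0 ∧ N ≤ ‖q.2‖ := by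
  have hp2' : 0 < ‖p.2‖ := norm_pos_iff.2 hp2
  obtain ⟨m, hm, hmN⟩ : ∃ m : ℕ, 0 < m ∧ N / ‖p.2‖ ≤ m :=
    ⟨_, Nat.succ_pos _, (Nat.le_ceil _).trans (mod_cast Nat.le_succ _)⟩
  refine ⟨(m : ℝ) • p, hE p hp m hm, by simp [hp1], ?_⟩
  rwa [Prod.smul_snd, norm_smul, Real.norm_natCast, ← div_le_iff₀ hp2']

theorem abs_le_exp_of_exp_mul_abs_le {S c x : ℝ} (h : exp S * |x| ≤ exp (-c * S)) :
    |x| ≤ exp (-(1 + c) * S) := by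
  rwa [← le_div_iff₀' (exp_pos S), ← exp_sub, show -c * S - S = -(1 + c) * S by ring] at h

section

variable {ι : Type*} [Fintype ι] {I : Finset ι} {z : ι → ℝ}

theorem norm_le_prod_of_one_le (hzI : ∀ i ∈ I, 1 ≤ z i) (hzIc : ∀ i ∉ I, z i = 0) :
    ‖z‖ ≤ ∏ i ∈ I, z i := by
  refine (pi_norm_le_iff_of_nonneg (zero_le_one.trans (Finset.one_le_prod hzI))).2 fun i ↦ ?_
  by_cases hi : i ∈ I
  · rw [Real.norm_of_nonneg (zero_le_one.trans (hzI i hi)), ← Finset.prod_singleton z i]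
    exact Finset.prod_le_prod_of_subset_of_one_le (by simpa using hi)
      (by simpa using zero_le_one.trans (hzI i hi)) fun j hj _ ↦ hzI j hj
  · rw [hzIc i hi, norm_zero]
    exact Finset.prod_nonneg fun j hj ↦ zero_le_one.trans (hzI j hj)

theorem exists_time_of_abs_le_rpow {c w x : ℝ} (hc : 0 ≤ c) (hkc : I.card * c < 1)
    (hw : w * (1 - I.card * c) = 1 + c) (hzI : ∀ i ∈ I, 1 ≤ z i) (hzIc : ∀ i ∉ I, z i = 0)
    (hx : |x| ≤ (∏ i ∈ I, z i) ^ (-w)) :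
    ∃ t : ι → ℝ, (∀ i, 0 ≤ t i) ∧ ∑ i, t i = log (∏ i ∈ I, z i) / (1 - I.card * c) ∧
      exp (∑ i, t i) * |x| ≤ exp (-c * ∑ i, t i) ∧
      ∀ i, exp (-t i) * |z i| ≤ exp (-c * ∑ i, t i) := by
  classical
  have hzpos : ∀ i ∈ I, 0 < z i := fun i hi ↦ one_pos.trans_le (hzI i hi)
  have hkc' : 0 < 1 - I.card * c := sub_pos.2 hkc
  set L := log (∏ i ∈ I, z i)
  set S := L / (1 - I.card * c)
  have hLS : L = (1 - I.card * c) * S := (mul_div_cancel₀ L hkc'.ne').symm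
  have hS : 0 ≤ S := div_nonneg (log_nonneg (Finset.one_le_prod hzI)) hkc'.le
  set t : ι → ℝ := fun i ↦ if i ∈ I then log (z i) + c * S else 0
  have hsum : ∑ i, t i = S := by
    simp only [t, Finset.sum_ite_mem, Finset.univ_inter, Finset.sum_add_distrib,
      Finset.sum_const, nsmul_eq_mul, ← log_prod fun i hi ↦ (hzpos i hi).ne']
    linear_combination hLS
  refine ⟨t, fun i ↦ ?_, hsum, ?_, fun i ↦ ?_⟩
  · by_cases hi : i ∈ I
    · simpa [t, hi] using add_nonneg (log_nonneg (hzI i hi)) (mul_nonneg hc hS)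
    · simp [t, hi]
  · calc exp (∑ i, t i) * |x| ≤ exp S * exp (L * -w) := by
          rw [hsum, ← rpow_def_of_pos (Finset.prod_pos hzpos)]; gcongr
      _ = exp (-c * ∑ i, t i) := by
          rw [← exp_add, hsum]; congr 1
          linear_combination (-S) * hw + (-w) * hLS
  · rw [hsum]
    by_cases hi : i ∈ I
    · rw [abs_of_pos (hzpos i hi), ← exp_log (hzpos i hi), ← exp_add]
      simp [t, hi]
    · simp [hzIc i hi, exp_nonneg]

theorem abs_le_rpow_of_exp_mul_abs_le {t : ι → ℝ} {c w x : ℝ} (hw0 : 0 ≤ w)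
    (hw : w * (1 - I.card * c) = 1 + c) (ht : ∀ i, 0 ≤ t i) (hzI : ∀ i ∈ I, 0 < z i)
    (hx : exp (∑ i, t i) * |x| ≤ exp (-c * ∑ i, t i))
    (hz : ∀ i, exp (-t i) * |z i| ≤ exp (-c * ∑ i, t i)) :
    |x| ≤ (∏ i ∈ I, z i) ^ (-w) := by
  set S := ∑ i, t i
  have hlog : ∀ i ∈ I, log (z i) ≤ t i - c * S := fun i hi ↦ by
    have hzi := hz i
    rw [abs_of_pos (hzI i hi)] at hzi
    rw [log_le_iff_le_exp (hzI i hi), sub_eq_add_neg, exp_add, ← neg_mul]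
    calc z i = exp (t i) * (exp (-t i) * z i) := by rw [← mul_assoc, ← exp_add]; simp
      _ ≤ exp (t i) * exp (-c * S) := by gcongr
  have hP : log (∏ i ∈ I, z i) ≤ (1 - I.card * c) * S := by
    rw [log_prod fun i hi ↦ (hzI i hi).ne']
    calc ∑ i ∈ I, log (z i) ≤ ∑ i ∈ I, (t i - c * S) := Finset.sum_le_sum hlog
      _ = ∑ i ∈ I, t i - I.card * (c * S) := by simp [Finset.sum_sub_distrib]
      _ ≤ S - I.card * (c * S) := by
          gcongr; exact Finset.sum_le_sum_of_subset_of_nonneg I.subset_univ fun i _ _ ↦ ht i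
      _ = (1 - I.card * c) * S := by ring
  rw [rpow_def_of_pos (Finset.prod_pos hzI)]
  refine (abs_le_exp_of_exp_mul_abs_le hx).trans (exp_le_exp.2 ?_)
  have := mul_le_mul_of_nonneg_left hP hw0
  rw [← mul_assoc, hw] at this
  linarith

variable {E : Set (ℝ × (ι → ℝ))} {c w : ℝ}

theorem forall_exists_time_of_forall_exists_abs_le_rpow (hc : 0 ≤ c) (hkc : I.card * c < 1)
    (hw : w * (1 - I.card * c) = 1 + c)
    (hz : ∀ xz ∈ E, (∀ i ∈ I, (1 : ℝ) ≤ xz.2 i) ∧ ∀ i ∉ I, xz.2 i = 0)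
    (h : ∀ N > (0 : ℝ), ∃ xz ∈ E, N ≤ ‖xz.2‖ ∧ |xz.1| ≤ (∏ i ∈ I, xz.2 i) ^ (-w)) :
    ∀ T > (0 : ℝ), ∃ t : ι → ℝ, (∀ i, 0 ≤ t i) ∧ T ≤ ∑ i, t i ∧
      ∃ xz ∈ E, xz ≠ 0 ∧ exp (∑ i, t i) * |xz.1| ≤ exp (-c * ∑ i, t i) ∧
        ∀ i, exp (-t i) * |xz.2 i| ≤ exp (-c * ∑ i, t i) := by
  intro T _
  have hkc' : 0 < 1 - I.card * c := sub_pos.2 hkc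
  obtain ⟨xz, hE, hN, hx⟩ := h (exp ((1 - I.card * c) * T)) (exp_pos _)
  obtain ⟨hzI, hzIc⟩ := hz xz hE
  obtain ⟨t, ht0, hsum, hxt, hzt⟩ := exists_time_of_abs_le_rpow hc hkc hw hzI hzIc hx
  have hxz : xz ≠ 0 := by
    rintro rfl
    exact (exp_pos _).not_ge (by simpa using hN)
  refine ⟨t, ht0, ?_, xz, hE, hxz, hxt, hzt⟩
  rw [hsum, le_div_iff₀' hkc', ← log_exp ((1 - I.card * c) * T)]
  exact log_le_log (exp_pos _) (hN.trans (norm_le_prod_of_one_le hzI hzIc))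

theorem forall_exists_abs_le_rpow_of_forall_exists_time (hc : 0 < 1 + c) (hw0 : 0 ≤ w)
    (hw : w * (1 - I.card * c) = 1 + c) (hI : I.Nonempty)
    (hdisc : ∀ p : ℝ × (ι → ℝ), ¬AccPt p (𝓟 E))
    (hhom : ∀ xz ∈ E, ∀ m : ℕ, 0 < m → (m : ℝ) • xz ∈ E)
    (hz : ∀ xz ∈ E, (∀ i ∈ I, (1 : ℝ) ≤ xz.2 i) ∧ ∀ i ∉ I, xz.2 i = 0)
    (h : ∀ T > (0 : ℝ), ∃ t : ι → ℝ, (∀ i, 0 ≤ t i) ∧ T ≤ ∑ i, t i ∧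
      ∃ xz ∈ E, xz ≠ 0 ∧ exp (∑ i, t i) * |xz.1| ≤ exp (-c * ∑ i, t i) ∧
        ∀ i, exp (-t i) * |xz.2 i| ≤ exp (-c * ∑ i, t i)) :
    ∀ N > (0 : ℝ), ∃ xz ∈ E, N ≤ ‖xz.2‖ ∧ |xz.1| ≤ (∏ i ∈ I, xz.2 i) ^ (-w) := by
  intro N _
  obtain ⟨j, hj⟩ := hI
  by_cases h0 : ∃ p ∈ E, p.1 = 0
  · obtain ⟨p, hp, hp1⟩ := h0
    have hp2 : p.2 ≠ 0 := fun h ↦ absurd ((hz p hp).1 j hj) (by simp [h])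
    obtain ⟨q, hq, hq1, hqN⟩ := exists_fst_eq_zero_le_norm_snd hhom hp hp1 hp2 N
    refine ⟨q, hq, hqN, ?_⟩
    rw [hq1, abs_zero]
    exact rpow_nonneg (Finset.prod_nonneg fun i hi ↦ zero_le_one.trans ((hz q hq).1 i hi)) _
  · push Not at h0
    have htend : Tendsto (fun T ↦ exp (-(1 + c) * T)) atTop (𝓝 0) :=
      tendsto_exp_atBot.comp (tendsto_id.const_mul_atTop_of_neg (neg_lt_zero.2 hc))
    obtain ⟨T, hTlarge, hT⟩ :=
      ((htend.eventually (eventually_forall_lt_norm_snd hdisc h0 N)).and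
        (eventually_gt_atTop 0)).exists
    obtain ⟨t, ht0, hTt, xz, hE, -, hxt, hzt⟩ := h T hT
    have hzI : ∀ i ∈ I, 0 < xz.2 i := fun i hi ↦ one_pos.trans_le ((hz xz hE).1 i hi)
    refine ⟨xz, hE, (hTlarge xz hE ?_).le, abs_le_rpow_of_exp_mul_abs_le hw0 hw ht0 hzI hxt hzt⟩
    exact (abs_le_exp_of_exp_mul_abs_le hxt).trans
      (exp_le_exp.2 (mul_le_mul_of_nonpos_left hTt (by linarith)))

end

theorem stmt7_general (n : ℕ) (k : ℕ) (hk1 : 1 ≤ k)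
    (I : Finset (Fin n)) (hI : I.card = k)
    (E : Set (ℝ × (Fin n → ℝ)))
    (hdisc : ∀ p : ℝ × (Fin n → ℝ), ¬ AccPt p (Filter.principal E))
    (hhom : ∀ xz ∈ E, ∀ m : ℕ, 0 < m → (m : ℝ) • xz ∈ E)
    (hz : ∀ xz ∈ E, (∀ i ∈ I, (1:ℝ) ≤ xz.2 i) ∧ ∀ i ∉ I, xz.2 i = 0)
    (v : ℝ) (hv : (n : ℝ) < v) :
    (∀ N > (0:ℝ), ∃ xz ∈ E, N ≤ ‖xz.2‖ ∧
        |xz.1| ≤ (∏ i ∈ I, xz.2 i) ^ (-(v / (n : ℝ)))) ↔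
    (∀ T > (0:ℝ), ∃ t : Fin n → ℝ, (∀ i, 0 ≤ t i) ∧ T ≤ ∑ i, t i ∧
        ∃ xz ∈ E, xz ≠ 0 ∧
          Real.exp (∑ i, t i) * |xz.1| ≤
            Real.exp (-((v - n) / (k * v + n)) * ∑ i, t i) ∧
          ∀ i, Real.exp (-(t i)) * |xz.2 i| ≤
            Real.exp (-((v - n) / (k * v + n)) * ∑ i, t i)) := by
  subst hI
  have hI : I.Nonempty := Finset.card_pos.1 hk1
  have hn : (0 : ℝ) < n := Nat.cast_pos.2 hI.choose.pos
  have hv0 : 0 < v := hn.trans hv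
  have hden : (0 : ℝ) < I.card * v + n := by positivity
  set c := (v - n) / (I.card * v + n)
  have hc : 0 ≤ c := div_nonneg (by linarith) hden.le
  have hkc : I.card * c < 1 := by
    rw [← mul_div_assoc, div_lt_one hden]; nlinarith [hk1]
  have hw : v / n * (1 - I.card * c) = 1 + c := by
    simp only [c]
    field_simp
    ring
  exact ⟨forall_exists_time_of_forall_exists_abs_le_rpow hc hkc hw hz,
    forall_exists_abs_le_rpow_of_forall_exists_time (by linarith) (by positivity) hw hI
      hdisc hhom hz⟩

theorem stmt7 (n : ℕ) (hn : 1 ≤ n) (k : ℕ) (hk1 : 1 ≤ k) (hkn : k ≤ n)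
    (I : Finset (Fin n)) (hI : I.card = k)
    (E : Set (ℝ × (Fin n → ℝ)))
    (hdisc : ∀ p : ℝ × (Fin n → ℝ), ¬ AccPt p (Filter.principal E))
    (hhom : ∀ xz ∈ E, ∀ m : ℕ, 0 < m → (m : ℝ) • xz ∈ E)
    (hz : ∀ xz ∈ E, (∀ i ∈ I, (1:ℝ) ≤ xz.2 i) ∧ ∀ i ∉ I, xz.2 i = 0)
    (v : ℝ) (hv : (n : ℝ) < v) :
    (∀ N > (0:ℝ), ∃ xz ∈ E, N ≤ ‖xz.2‖ ∧
        |xz.1| ≤ (∏ i ∈ I, xz.2 i) ^ (-(v / (n : ℝ)))) ↔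
    (∀ T > (0:ℝ), ∃ t : Fin n → ℝ, (∀ i, 0 ≤ t i) ∧ T ≤ ∑ i, t i ∧
        ∃ xz ∈ E, xz ≠ 0 ∧
          Real.exp (∑ i, t i) * |xz.1| ≤
            Real.exp (-((v - n) / (k * v + n)) * ∑ i, t i) ∧
          ∀ i, Real.exp (-(t i)) * |xz.2 i| ≤
            Real.exp (-((v - n) / (k * v + n)) * ∑ i, t i)) :=
  stmt7_general n k hk1 I hI E hdisc hhom hz v hv
end

section
/- Let n ≥ 1, y ∈ ℝⁿ, v > n, k ∈ {1,…,n}, and c_k = (v−n)/(kv+n). Then the following are equivalent: (1) for every N > 0 there exist q ∈ ℤⁿ with exactly k nonzero entries and ‖q‖ ≥ N, and p ∈ ℤ, such that |q·y + p| ≤ Π×(q)^{−v/n}; (2) for every T > 0 there exists t = (t₁,…,t_n) with tᵢ ≥ 0 and t := ∑ᵢtᵢ ≥ T such that g_t u_y(ℤ^{n+1}_k) contains a nonzero vector of supremum norm ≤ e^{−c_k·t}. -/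
/-!
Write `c = (v - n)/(k v + n)`; the exponents are tied by `1 + c = (v/n)(1 - k c)`.

(1) ⇒ (2): given a good approximation `(p, q)`, let `s` solve `(1 - k c) s = log Π×(q)` and put
`tᵢ = log |qᵢ| + c s` on the support of `q`, `tᵢ = 0` elsewhere. Then `∑ tᵢ = s`, `g_t` shrinks
every `qᵢ` to at most `e^{-c s}`, and `|p + q·y| ≤ Π×(q)^{-v/n} = e^{-(1+c) s}` is the remaining
coordinate bound.

(2) ⇒ (1): the coordinate bounds give `log Π×(q) ≤ (1 - k c) s`, which reverses the computation.
The vectors so found need not be large; but if they stay in a bounded box while `s → ∞`, then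
`p + q·y` eventually vanishes, and integer multiples of `(p, q)` are exact solutions of any size.
-/

open Filter MeasureTheory Metric Set BigOperators

/-- Π×(q) = ∏_{i : qᵢ ≠ 0} |qᵢ| (empty product = 1). -/
noncomputable def prodTimes {n : ℕ} (q : Fin n → ℤ) : ℝ :=
  ∏ i, if q i = 0 then 1 else |(q i : ℝ)|

open Real Finset

lemma one_le_abs_intCast {z : ℤ} (hz : z ≠ 0) : (1 : ℝ) ≤ |(z : ℝ)| := by
  exact_mod_cast Int.one_le_abs hz

lemma one_le_norm_intCast_of_ne_zero {n : ℕ} {q : Fin n → ℤ} (hq : q ≠ 0) :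
    1 ≤ ‖fun i => (q i : ℝ)‖ := by
  obtain ⟨i, hi⟩ := Function.ne_iff.1 hq
  exact (one_le_abs_intCast hi).trans (norm_le_pi_norm (fun i => (q i : ℝ)) i)

lemma ne_zero_of_card_support_pos {n : ℕ} {q : Fin n → ℤ} (h : 0 < #{i | q i ≠ 0}) : q ≠ 0 := by
  obtain ⟨i, hi⟩ := card_pos.1 h
  exact fun hq => (mem_filter.1 hi).2 (by simp [hq])

section prodTimes

variable {n : ℕ} (q : Fin n → ℤ)

lemma prodTimes_eq_prod_support : prodTimes q = ∏ i with q i ≠ 0, |(q i : ℝ)| := by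
  simp only [prodTimes, prod_filter, ne_eq, ite_not]

lemma one_le_prodTimes : 1 ≤ prodTimes q := by
  rw [prodTimes_eq_prod_support]
  exact one_le_prod fun i hi => one_le_abs_intCast (mem_filter.1 hi).2

lemma prodTimes_pos : 0 < prodTimes q := one_pos.trans_le (one_le_prodTimes q)

lemma abs_le_prodTimes (i : Fin n) : |(q i : ℝ)| ≤ prodTimes q := by
  by_cases hi : q i = 0
  · simpa [hi] using (prodTimes_pos q).le
  rw [prodTimes_eq_prod_support, ← prod_singleton (fun j => |(q j : ℝ)|) i]
  exact prod_le_prod_of_subset_of_one_le (by simpa using hi) (fun _ _ => abs_nonneg _)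
    fun j hj _ => one_le_abs_intCast (mem_filter.1 hj).2

lemma norm_le_prodTimes : ‖fun i => (q i : ℝ)‖ ≤ prodTimes q :=
  (pi_norm_le_iff_of_nonneg (prodTimes_pos q).le).2 fun i => abs_le_prodTimes q i

lemma log_prodTimes : log (prodTimes q) = ∑ i with q i ≠ 0, log |(q i : ℝ)| := by
  rw [prodTimes_eq_prod_support, log_prod]
  intro i hi
  exact abs_ne_zero.2 (Int.cast_ne_zero.2 (mem_filter.1 hi).2)

lemma prodTimes_rpow_neg (w : ℝ) : prodTimes q ^ (-w) = exp (-(w * log (prodTimes q))) := by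
  rw [rpow_def_of_pos (prodTimes_pos q)]
  ring_nf

lemma log_prodTimes_le {k : ℕ} (hcard : #{i | q i ≠ 0} = k) {t : Fin n → ℝ} {a : ℝ}
    (ht : ∀ i, 0 ≤ t i) (hq : ∀ i, exp (-t i) * |(q i : ℝ)| ≤ exp (-a)) :
    log (prodTimes q) ≤ ∑ i, t i - k * a := by
  have hcoord : ∀ i ∈ ({i | q i ≠ 0} : Finset (Fin n)), log |(q i : ℝ)| ≤ t i - a := by
    intro i hi
    have hi' := hq i
    rw [exp_neg, inv_mul_le_iff₀ (exp_pos _), ← exp_add] at hi'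
    rw [log_le_iff_le_exp (one_pos.trans_le (one_le_abs_intCast (mem_filter.1 hi).2))]
    simpa [sub_eq_add_neg] using hi'
  calc log (prodTimes q) ≤ ∑ i with q i ≠ 0, (t i - a) := log_prodTimes q ▸ sum_le_sum hcoord
    _ = ∑ i with q i ≠ 0, t i - k * a := by simp [sum_sub_distrib, hcard]
    _ ≤ ∑ i, t i - k * a :=
        sub_le_sub_right (sum_le_sum_of_subset_of_nonneg (subset_univ _) fun i _ _ => ht i) _

end prodTimes

lemma exp_mul_le_exp_neg_mul_iff {τ x c : ℝ} :
    exp τ * x ≤ exp (-c * τ) ↔ x ≤ exp (-((1 + c) * τ)) := by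
  rw [← le_div_iff₀' (exp_pos τ), ← exp_sub]
  ring_nf

section time

variable {n : ℕ} {q : Fin n → ℤ} {k : ℕ} {c : ℝ}

lemma exists_time_of_log_prodTimes (hcard : #{i | q i ≠ 0} = k) (hc : 0 ≤ c) {s : ℝ}
    (hs : 0 ≤ s) (hsum : log (prodTimes q) + k * c * s = s) :
    ∃ t : Fin n → ℝ, (∀ i, 0 ≤ t i) ∧ ∑ i, t i = s ∧
      ∀ i, exp (-t i) * |(q i : ℝ)| ≤ exp (-c * s) := by
  refine ⟨fun i => if q i ≠ 0 then log |(q i : ℝ)| + c * s else 0, fun i => ?_, ?_, fun i => ?_⟩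
  · dsimp only
    split_ifs with hi
    · exact add_nonneg (log_nonneg (one_le_abs_intCast hi)) (mul_nonneg hc hs)
    · exact le_rfl
  · rw [← sum_filter, sum_add_distrib, ← log_prodTimes, sum_const, hcard, nsmul_eq_mul]
    linarith
  · by_cases hi : q i = 0
    · simp [hi, (exp_pos _).le]
    · have hpos : 0 < |(q i : ℝ)| := one_pos.trans_le (one_le_abs_intCast hi)
      dsimp only
      rw [if_pos hi, neg_add, exp_add, exp_neg, exp_log hpos, mul_right_comm,
        inv_mul_cancel₀ hpos.ne', one_mul, neg_mul]

variable {y : Fin n → ℝ} {p : ℤ} {w : ℝ}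

lemma exists_time_of_abs_le_prodTimes_rpow (hcard : #{i | q i ≠ 0} = k) (hc : 0 ≤ c)
    (hkc : 0 < 1 - k * c) (hw : 1 + c = w * (1 - k * c))
    (hp : |(p : ℝ) + ∑ i, (q i : ℝ) * y i| ≤ prodTimes q ^ (-w)) :
    ∃ t : Fin n → ℝ, (∀ i, 0 ≤ t i) ∧ (1 - k * c) * ∑ i, t i = log (prodTimes q) ∧
      exp (∑ i, t i) * |(p : ℝ) + ∑ i, (q i : ℝ) * y i| ≤ exp (-c * ∑ i, t i) ∧
      ∀ i, exp (-t i) * |(q i : ℝ)| ≤ exp (-c * ∑ i, t i) := by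
  set s := log (prodTimes q) / (1 - k * c)
  have hls : (1 - k * c) * s = log (prodTimes q) := mul_div_cancel₀ _ hkc.ne'
  obtain ⟨t, ht0, hts, hcoord⟩ := exists_time_of_log_prodTimes hcard hc
    (div_nonneg (log_nonneg (one_le_prodTimes q)) hkc.le) (by linarith)
  refine ⟨t, ht0, hts ▸ hls, ?_, hts ▸ hcoord⟩
  rw [hts, exp_mul_le_exp_neg_mul_iff]
  calc _ ≤ prodTimes q ^ (-w) := hp
    _ = exp (-((1 + c) * s)) := by rw [prodTimes_rpow_neg, hw, ← hls, mul_assoc]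

lemma abs_le_prodTimes_rpow_of_time (hcard : #{i | q i ≠ 0} = k) (hw0 : 0 ≤ w)
    (hw : 1 + c = w * (1 - k * c)) {t : Fin n → ℝ} (ht : ∀ i, 0 ≤ t i)
    (hp : exp (∑ i, t i) * |(p : ℝ) + ∑ i, (q i : ℝ) * y i| ≤ exp (-c * ∑ i, t i))
    (hq : ∀ i, exp (-t i) * |(q i : ℝ)| ≤ exp (-c * ∑ i, t i)) :
    |(p : ℝ) + ∑ i, (q i : ℝ) * y i| ≤ prodTimes q ^ (-w) := by
  have hlog := log_prodTimes_le q hcard ht (a := c * ∑ i, t i) (by simpa only [neg_mul] using hq)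
  refine (exp_mul_le_exp_neg_mul_iff.1 hp).trans ?_
  rw [prodTimes_rpow_neg, exp_le_exp, neg_le_neg_iff, hw, mul_assoc]
  exact mul_le_mul_of_nonneg_left (by linarith) hw0

end time

section linearForm

variable {n : ℕ} (y : Fin n → ℝ)

/-- Over a bounded set of `q`, the values `p + q·y` range over finitely many translates of `ℤ`,
so the nonzero ones stay away from `0`. -/
lemma exists_pos_forall_abs_lt_imp_eq_zero (M : ℝ) :
    ∃ δ > 0, ∀ (p : ℤ) (q : Fin n → ℤ), ‖fun i => (q i : ℝ)‖ ≤ M →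
      |(p : ℝ) + ∑ i, (q i : ℝ) * y i| < δ → (p : ℝ) + ∑ i, (q i : ℝ) * y i = 0 := by
  set f : ℤ × (Fin n → ℤ) → ℝ := fun pq => |(pq.1 : ℝ) + ∑ i, (pq.2 i : ℝ) * y i|
  set B : ℤ := ⌈1 + M * ∑ i, |y i|⌉
  set box := Finset.Icc (-B) B ×ˢ Fintype.piFinset fun _ : Fin n => Finset.Icc (-⌈M⌉) ⌈M⌉
  set vals := insert 1 ((box.image f).filter (0 < ·))
  have hvals : ∀ x ∈ vals, 0 < x := by
    simp only [vals, Finset.mem_insert, mem_filter]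
    rintro x (rfl | ⟨-, hx⟩)
    exacts [one_pos, hx]
  refine ⟨vals.min' (insert_nonempty _ _), hvals _ (min'_mem _ _), fun p q hq hpq => ?_⟩
  have hlt1 : f (p, q) < 1 := hpq.trans_le (min'_le _ _ (mem_insert_self _ _))
  have hqM : ∀ i, |(q i : ℝ)| ≤ M := fun i => (norm_le_pi_norm (fun i => (q i : ℝ)) i).trans hq
  have hqy : |∑ i, (q i : ℝ) * y i| ≤ M * ∑ i, |y i| := by
    rw [mul_sum]
    refine (abs_sum_le_sum_abs _ _).trans (sum_le_sum fun i _ => ?_)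
    rw [abs_mul]
    exact mul_le_mul_of_nonneg_right (hqM i) (abs_nonneg _)
  have hmem : (p, q) ∈ box := by
    refine mem_product.2 ⟨Finset.mem_Icc.2 (abs_le.1 ?_), Fintype.mem_piFinset.2 fun i => ?_⟩
    · have := abs_sub_abs_le_abs_add (p : ℝ) (∑ i, (q i : ℝ) * y i)
      exact_mod_cast (show |(p : ℝ)| ≤ B by linarith [Int.le_ceil (1 + M * ∑ i, |y i|)])
    · have : |(q i : ℝ)| ≤ ⌈M⌉ := (hqM i).trans (Int.le_ceil M)
      exact Finset.mem_Icc.2 (abs_le.1 (by exact_mod_cast this))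
  by_contra hne
  have hf : f (p, q) ∈ vals :=
    mem_insert_of_mem (mem_filter.2 ⟨mem_image_of_mem f hmem, abs_pos.2 hne⟩)
  exact (min'_le _ _ hf).not_gt hpq

lemma exists_norm_ge_of_add_eq_zero {p : ℤ} {q : Fin n → ℤ} (hq : q ≠ 0)
    (h : (p : ℝ) + ∑ i, (q i : ℝ) * y i = 0) (N w : ℝ) :
    ∃ q' : Fin n → ℤ, #{i | q' i ≠ 0} = #{i | q i ≠ 0} ∧ N ≤ ‖fun i => (q' i : ℝ)‖ ∧
      ∃ p' : ℤ, |(∑ i, (q' i : ℝ) * y i) + p'| ≤ prodTimes q' ^ (-w) := by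
  obtain ⟨m, hm⟩ := exists_nat_gt (max N 0)
  have hm0 : m ≠ 0 := by
    rintro rfl
    exact (le_max_right N 0).not_gt (by exact_mod_cast hm)
  refine ⟨m • q, ?_, ?_, m * p, ?_⟩
  · simp [hm0]
  · have hnorm : ‖fun i => ((m • q) i : ℝ)‖ = m * ‖fun i => (q i : ℝ)‖ := by
      rw [← RCLike.norm_natCast (K := ℝ) m, ← norm_smul]
      congr 1
      ext i
      simp
    rw [hnorm]
    have := le_max_left N 0
    nlinarith [one_le_norm_intCast_of_ne_zero hq, (Nat.cast_nonneg m : (0 : ℝ) ≤ m)]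
  · have : (∑ i, ((m • q) i : ℝ) * y i) + ((m * p : ℤ) : ℝ) =
        m * ((p : ℝ) + ∑ i, (q i : ℝ) * y i) := by
      simp [mul_add, mul_sum, mul_assoc, add_comm]
    rw [this, h, mul_zero, abs_zero]
    exact rpow_nonneg (prodTimes_pos _).le _

end linearForm

section exponent

variable {n k v : ℝ}

lemma sub_div_mul_add_pos (hn : 0 < n) (hk : 0 ≤ k) (hv : n < v) :
    0 < (v - n) / (k * v + n) :=
  div_pos (by linarith) (by nlinarith)

lemma one_sub_mul_sub_div_pos (hn : 0 < n) (hk : 0 ≤ k) (hv : n < v) :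
    0 < 1 - k * ((v - n) / (k * v + n)) := by
  have hd : 0 < k * v + n := by nlinarith
  rw [mul_div_assoc', one_sub_div hd.ne']
  exact div_pos (by nlinarith) hd

lemma one_add_sub_div_eq (hn : 0 < n) (hk : 0 ≤ k) (hv : n < v) :
    1 + (v - n) / (k * v + n) = v / n * (1 - k * ((v - n) / (k * v + n))) := by
  have hd : k * v + n ≠ 0 := by nlinarith
  rw [mul_div_assoc', one_sub_div hd, one_add_div hd, div_mul_div_comm,
    div_eq_div_iff hd (mul_ne_zero hn.ne' hd)]
  ring

end exponent

theorem stmt8_general (n : ℕ) (y : Fin n → ℝ) (v : ℝ) (hv : (n : ℝ) < v)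
    (k : ℕ) (hk1 : 1 ≤ k) (hkn : k ≤ n) :
    (∀ N > (0:ℝ), ∃ q : Fin n → ℤ,
        (Finset.univ.filter fun i => q i ≠ 0).card = k ∧
        N ≤ ‖(fun i => (q i : ℝ))‖ ∧
        ∃ p : ℤ, |(∑ i, (q i : ℝ) * y i) + (p : ℝ)| ≤ (prodTimes q) ^ (-(v / (n : ℝ)))) ↔
    (∀ T > (0:ℝ), ∃ t : Fin n → ℝ, (∀ i, 0 ≤ t i) ∧ T ≤ ∑ i, t i ∧
        ∃ (p : ℤ) (q : Fin n → ℤ),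
          (Finset.univ.filter fun i => q i ≠ 0).card = k ∧
          ¬(p = 0 ∧ q = 0) ∧
          Real.exp (∑ i, t i) * |(p : ℝ) + ∑ i, (q i : ℝ) * y i| ≤
            Real.exp (-((v - n) / (k * v + n)) * ∑ i, t i) ∧
          ∀ i, Real.exp (-(t i)) * |(q i : ℝ)| ≤
            Real.exp (-((v - n) / (k * v + n)) * ∑ i, t i)) := by
  have hn : (0 : ℝ) < n := by exact_mod_cast hk1.trans hkn
  have hc := sub_div_mul_add_pos hn k.cast_nonneg hv
  have hkc := one_sub_mul_sub_div_pos hn k.cast_nonneg hv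
  have hw := one_add_sub_div_eq hn k.cast_nonneg hv
  set c := (v - n) / (k * v + n)
  have hq0 {q : Fin n → ℤ} (hcard : #{i | q i ≠ 0} = k) : q ≠ 0 :=
    ne_zero_of_card_support_pos (hcard ▸ hk1)
  constructor
  · intro H T _
    obtain ⟨q, hcard, hqT, p, hp⟩ := H (exp ((1 - k * c) * T)) (exp_pos _)
    rw [add_comm] at hp
    obtain ⟨t, ht0, hlog, hpt, hqt⟩ :=
      exists_time_of_abs_le_prodTimes_rpow hcard hc.le hkc hw hp
    refine ⟨t, ht0, le_of_mul_le_mul_left ?_ hkc, p, q, hcard, fun h => hq0 hcard h.2, hpt, hqt⟩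
    rw [hlog, le_log_iff_exp_le (prodTimes_pos q)]
    exact hqT.trans (norm_le_prodTimes q)
  · intro H N _
    obtain ⟨δ, hδ, hδ_eq_zero⟩ := exists_pos_forall_abs_lt_imp_eq_zero y N
    obtain ⟨T, hT⟩ := (((tendsto_exp_neg_atTop_nhds_zero.comp
      (tendsto_id.const_mul_atTop (by linarith : 0 < 1 + c))).eventually (gt_mem_nhds hδ)).and
      (eventually_gt_atTop 0)).exists_forall_of_atTop
    obtain ⟨t, ht0, hTt, p, q, hcard, -, hpt, hqt⟩ := H T (hT T le_rfl).2
    by_cases hN : N ≤ ‖fun i => (q i : ℝ)‖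
    · refine ⟨q, hcard, hN, p, ?_⟩
      rw [add_comm]
      exact abs_le_prodTimes_rpow_of_time hcard (div_pos (hn.trans hv) hn).le hw ht0 hpt hqt
    · have hzero := hδ_eq_zero p q (not_le.1 hN).le
        ((exp_mul_le_exp_neg_mul_iff.1 hpt).trans_lt (hT _ hTt).1)
      obtain ⟨q', hcard', hq', p', hp'⟩ :=
        exists_norm_ge_of_add_eq_zero y (hq0 hcard) hzero N (v / n)
      exact ⟨q', hcard'.trans hcard, hq', p', hp'⟩

theorem stmt8 (n : ℕ) (hn : 1 ≤ n) (y : Fin n → ℝ) (v : ℝ) (hv : (n : ℝ) < v)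
    (k : ℕ) (hk1 : 1 ≤ k) (hkn : k ≤ n) :
    (∀ N > (0:ℝ), ∃ q : Fin n → ℤ,
        (Finset.univ.filter fun i => q i ≠ 0).card = k ∧
        N ≤ ‖(fun i => (q i : ℝ))‖ ∧
        ∃ p : ℤ, |(∑ i, (q i : ℝ) * y i) + (p : ℝ)| ≤ (prodTimes q) ^ (-(v / (n : ℝ)))) ↔
    (∀ T > (0:ℝ), ∃ t : Fin n → ℝ, (∀ i, 0 ≤ t i) ∧ T ≤ ∑ i, t i ∧
        ∃ (p : ℤ) (q : Fin n → ℤ),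
          (Finset.univ.filter fun i => q i ≠ 0).card = k ∧
          ¬(p = 0 ∧ q = 0) ∧
          Real.exp (∑ i, t i) * |(p : ℝ) + ∑ i, (q i : ℝ) * y i| ≤
            Real.exp (-((v - n) / (k * v + n)) * ∑ i, t i) ∧
          ∀ i, Real.exp (-(t i)) * |(q i : ℝ)| ≤
            Real.exp (-((v - n) / (k * v + n)) * ∑ i, t i)) :=
  stmt8_general n y v hv k hk1 hkn
end
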